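/- Define S(g) := (1/2)·(Tr(g²) − (1/2)Tr(g)²)/det(g) for invertible 3×3 real matrices g. Then, as the real symmetric 3×3 matrix ε tends to 0, S(I₃ + ε) = −3/4 + (1/4)Tr(ε) − (1/12)Tr(ε)² + (1/4)(ε₁₂² + ε₁₃² + ε₂₃²) + (1/24)((ε₁₁ − ε₂₂)² + (ε₁₁ − ε₃₃)² + (ε₂₂ − ε₃₃)²) + O(‖ε‖³); that is, the difference between S(I₃+ε) and the displayed quadratic expression is bounded in norm by a constant times ‖ε‖³ for all symmetric ε sufficiently close to 0. -/
import Mathlib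

attribute [local instance] Matrix.normedAddCommGroup

/-- The scalar curvature functional `S(g) = (1/2)(Tr(g²) − (1/2)Tr(g)²)/det(g)`. -/
noncomputable def Sfun (g : Matrix (Fin 3) (Fin 3) ℝ) : ℝ :=
  (1 / 2) * (Matrix.trace (g * g) - (1 / 2) * g.trace ^ 2) / g.det

private lemma bnd2 (m x y : ℝ) (hx : |x| ≤ m) (hy : |y| ≤ m) : |x * y| ≤ m ^ 2 := by
  have hm : 0 ≤ m := (abs_nonneg x).trans hx
  calc |x * y| = |x| * |y| := abs_mul x y
    _ ≤ m * m := mul_le_mul hx hy (abs_nonneg y) hm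
    _ = m ^ 2 := (sq m).symm

private lemma bnd3 (m x y z : ℝ) (hx : |x| ≤ m) (hy : |y| ≤ m) (hz : |z| ≤ m) :
    |x * y * z| ≤ m ^ 3 := by
  have hm : 0 ≤ m := (abs_nonneg x).trans hx
  have hm2 : 0 ≤ m ^ 2 := pow_nonneg hm 2
  calc |x * y * z| = |x * y| * |z| := abs_mul _ _
    _ ≤ m ^ 2 * m := mul_le_mul (bnd2 m x y hx hy) hz (abs_nonneg z) hm2
    _ = m ^ 3 := by ring

private lemma bnd4 (m x y z w : ℝ) (hm1 : m ≤ 1) (hx : |x| ≤ m) (hy : |y| ≤ m)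
    (hz : |z| ≤ m) (hw : |w| ≤ m) : |x * y * z * w| ≤ m ^ 3 := by
  have hm : 0 ≤ m := (abs_nonneg x).trans hx
  calc |x * y * z * w| = |x * y * z| * |w| := abs_mul _ _
    _ ≤ m ^ 3 * 1 := mul_le_mul (bnd3 m x y z hx hy hz) (hw.trans hm1) (abs_nonneg w)
        (pow_nonneg hm 3)
    _ = m ^ 3 := mul_one _

private lemma bnd5 (m x y z w v : ℝ) (hm1 : m ≤ 1) (hx : |x| ≤ m) (hy : |y| ≤ m)
    (hz : |z| ≤ m) (hw : |w| ≤ m) (hv : |v| ≤ m) : |x * y * z * w * v| ≤ m ^ 3 := by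
  have hm : 0 ≤ m := (abs_nonneg x).trans hx
  calc |x * y * z * w * v| = |x * y * z * w| * |v| := abs_mul _ _
    _ ≤ m ^ 3 * 1 := mul_le_mul (bnd4 m x y z w hm1 hx hy hz hw) (hv.trans hm1)
        (abs_nonneg v) (pow_nonneg hm 3)
    _ = m ^ 3 := mul_one _

set_option maxHeartbeats 4000000 in
set_option maxRecDepth 100000 in
/-- As the real symmetric 3×3 matrix `ε` tends to `0`,
`S(I₃ + ε) = −3/4 + (1/4)Tr(ε) − (1/12)Tr(ε)² + (1/4)(ε₁₂² + ε₁₃² + ε₂₃²)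
 + (1/24)((ε₁₁−ε₂₂)² + (ε₁₁−ε₃₃)² + (ε₂₂−ε₃₃)²) + O(‖ε‖³)`:
the difference is bounded by a constant times `‖ε‖³` for all symmetric `ε` near `0`. -/
theorem S_expansion_round_metric :
    ∃ C > (0 : ℝ), ∃ δ > (0 : ℝ), ∀ ε : Matrix (Fin 3) (Fin 3) ℝ, ε.IsSymm → ‖ε‖ < δ →
      |Sfun (1 + ε) -
          (-(3 / 4) + (1 / 4) * ε.trace - (1 / 12) * ε.trace ^ 2 +
            (1 / 4) * ((ε 0 1) ^ 2 + (ε 0 2) ^ 2 + (ε 1 2) ^ 2) +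
            (1 / 24) * ((ε 0 0 - ε 1 1) ^ 2 + (ε 0 0 - ε 2 2) ^ 2 +
              (ε 1 1 - ε 2 2) ^ 2))| ≤ C * ‖ε‖ ^ 3 := by
  refine ⟨45, by norm_num, 1/10, by norm_num, fun ε hsym hδ => ?_⟩
  have hm0 : (0:ℝ) ≤ ‖ε‖ := norm_nonneg ε
  have hm1 : ‖ε‖ ≤ 1 := by linarith
  have ha : |ε 0 0| ≤ ‖ε‖ := by
    simpa using Matrix.norm_entry_le_entrywise_sup_norm ε (i := 0) (j := 0)
  have hb : |ε 1 1| ≤ ‖ε‖ := by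
    simpa using Matrix.norm_entry_le_entrywise_sup_norm ε (i := 1) (j := 1)
  have hc : |ε 2 2| ≤ ‖ε‖ := by
    simpa using Matrix.norm_entry_le_entrywise_sup_norm ε (i := 2) (j := 2)
  have hd : |ε 0 1| ≤ ‖ε‖ := by
    simpa using Matrix.norm_entry_le_entrywise_sup_norm ε (i := 0) (j := 1)
  have he : |ε 0 2| ≤ ‖ε‖ := by
    simpa using Matrix.norm_entry_le_entrywise_sup_norm ε (i := 0) (j := 2)
  have hf : |ε 1 2| ≤ ‖ε‖ := by
    simpa using Matrix.norm_entry_le_entrywise_sup_norm ε (i := 1) (j := 2)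
  have hm2 : ‖ε‖ ^ 2 ≤ 1/100 := by nlinarith
  have hm3 : ‖ε‖ ^ 3 ≤ 1/1000 := by nlinarith
  -- lower bound on the determinant
  obtain ⟨hdl0, hdu0⟩ := abs_le.mp (bnd2 ‖ε‖ (ε 1 2) (ε 1 2) hf hf)
  obtain ⟨hdl1, hdu1⟩ := abs_le.mp (bnd2 ‖ε‖ (ε 0 2) (ε 0 2) he he)
  obtain ⟨hdl2, hdu2⟩ := abs_le.mp (bnd3 ‖ε‖ (ε 0 1) (ε 0 2) (ε 1 2) hd he hf)
  obtain ⟨hdl3, hdu3⟩ := abs_le.mp (bnd2 ‖ε‖ (ε 0 1) (ε 0 1) hd hd)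
  obtain ⟨hdl5, hdu5⟩ := abs_le.mp (bnd3 ‖ε‖ (ε 2 2) (ε 0 1) (ε 0 1) hc hd hd)
  obtain ⟨hdl7, hdu7⟩ := abs_le.mp (bnd3 ‖ε‖ (ε 1 1) (ε 0 2) (ε 0 2) hb he he)
  obtain ⟨hdl8, hdu8⟩ := abs_le.mp (bnd2 ‖ε‖ (ε 1 1) (ε 2 2) hb hc)
  obtain ⟨hdl10, hdu10⟩ := abs_le.mp (bnd3 ‖ε‖ (ε 0 0) (ε 1 2) (ε 1 2) ha hf hf)
  obtain ⟨hdl11, hdu11⟩ := abs_le.mp (bnd2 ‖ε‖ (ε 0 0) (ε 2 2) ha hc)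
  obtain ⟨hdl12, hdu12⟩ := abs_le.mp (bnd2 ‖ε‖ (ε 0 0) (ε 1 1) ha hb)
  obtain ⟨hdl13, hdu13⟩ := abs_le.mp (bnd3 ‖ε‖ (ε 0 0) (ε 1 1) (ε 2 2) ha hb hc)
  obtain ⟨hal, hau⟩ := abs_le.mp ha
  obtain ⟨hbl, hbu⟩ := abs_le.mp hb
  obtain ⟨hcl, hcu⟩ := abs_le.mp hc
  obtain ⟨hdl, hdu⟩ := abs_le.mp hd
  obtain ⟨hel, heu⟩ := abs_le.mp he
  obtain ⟨hfl, hfu⟩ := abs_le.mp hf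
  have hD2 : (1:ℝ)/2 ≤ (1) + (-1) * ε 1 2 * ε 1 2 + (-1) * ε 0 2 * ε 0 2 + (2) * ε 0 1 * ε 0 2 * ε 1 2 + (-1) * ε 0 1 * ε 0 1 + (1) * ε 2 2 + (-1) * ε 2 2 * ε 0 1 * ε 0 1 + (1) * ε 1 1 + (-1) * ε 1 1 * ε 0 2 * ε 0 2 + (1) * ε 1 1 * ε 2 2 + (1) * ε 0 0 + (-1) * ε 0 0 * ε 1 2 * ε 1 2 + (1) * ε 0 0 * ε 2 2 + (1) * ε 0 0 * ε 1 1 + (1) * ε 0 0 * ε 1 1 * ε 2 2 := by linarith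
  have hDpos : (0:ℝ) < (1) + (-1) * ε 1 2 * ε 1 2 + (-1) * ε 0 2 * ε 0 2 + (2) * ε 0 1 * ε 0 2 * ε 1 2 + (-1) * ε 0 1 * ε 0 1 + (1) * ε 2 2 + (-1) * ε 2 2 * ε 0 1 * ε 0 1 + (1) * ε 1 1 + (-1) * ε 1 1 * ε 0 2 * ε 0 2 + (1) * ε 1 1 * ε 2 2 + (1) * ε 0 0 + (-1) * ε 0 0 * ε 1 2 * ε 1 2 + (1) * ε 0 0 * ε 2 2 + (1) * ε 0 0 * ε 1 1 + (1) * ε 0 0 * ε 1 1 * ε 2 2 := by linarith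
  have hDne : ((1) + (-1) * ε 1 2 * ε 1 2 + (-1) * ε 0 2 * ε 0 2 + (2) * ε 0 1 * ε 0 2 * ε 1 2 + (-1) * ε 0 1 * ε 0 1 + (1) * ε 2 2 + (-1) * ε 2 2 * ε 0 1 * ε 0 1 + (1) * ε 1 1 + (-1) * ε 1 1 * ε 0 2 * ε 0 2 + (1) * ε 1 1 * ε 2 2 + (1) * ε 0 0 + (-1) * ε 0 0 * ε 1 2 * ε 1 2 + (1) * ε 0 0 * ε 2 2 + (1) * ε 0 0 * ε 1 1 + (1) * ε 0 0 * ε 1 1 * ε 2 2) ≠ 0 := ne_of_gt hDpos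
  -- exact formula for Sfun (1 + ε)
  have hS : Sfun (1 + ε) = ((-3/4) + (1) * ε 1 2 * ε 1 2 + (1) * ε 0 2 * ε 0 2 + (1) * ε 0 1 * ε 0 1 + (-1/2) * ε 2 2 + (1/4) * ε 2 2 * ε 2 2 + (-1/2) * ε 1 1 + (-1/2) * ε 1 1 * ε 2 2 + (1/4) * ε 1 1 * ε 1 1 + (-1/2) * ε 0 0 + (-1/2) * ε 0 0 * ε 2 2 + (-1/2) * ε 0 0 * ε 1 1 + (1/4) * ε 0 0 * ε 0 0) / ((1) + (-1) * ε 1 2 * ε 1 2 + (-1) * ε 0 2 * ε 0 2 + (2) * ε 0 1 * ε 0 2 * ε 1 2 + (-1) * ε 0 1 * ε 0 1 + (1) * ε 2 2 + (-1) * ε 2 2 * ε 0 1 * ε 0 1 + (1) * ε 1 1 + (-1) * ε 1 1 * ε 0 2 * ε 0 2 + (1) * ε 1 1 * ε 2 2 + (1) * ε 0 0 + (-1) * ε 0 0 * ε 1 2 * ε 1 2 + (1) * ε 0 0 * ε 2 2 + (1) * ε 0 0 * ε 1 1 + (1) * ε 0 0 * ε 1 1 * ε 2 2) := by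
    rw [Sfun, Matrix.det_fin_three, Matrix.trace_fin_three, Matrix.trace_fin_three]
    simp only [Matrix.mul_apply, Matrix.add_apply, Matrix.one_apply, Fin.sum_univ_three,
      Fin.reduceEq, if_false, if_true, hsym.apply 0 1, hsym.apply 0 2, hsym.apply 1 2, reduceIte]
    norm_num [hsym.apply 0 1, hsym.apply 0 2, hsym.apply 1 2]
    ring_nf
  -- bounds on the monomials of the remainder R
  obtain ⟨hl0, hu0⟩ := abs_le.mp (bnd4 ‖ε‖ (ε 1 2) (ε 1 2) (ε 1 2) (ε 1 2) hm1 hf hf hf hf)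
  obtain ⟨hl1, hu1⟩ := abs_le.mp (bnd4 ‖ε‖ (ε 0 2) (ε 0 2) (ε 1 2) (ε 1 2) hm1 he he hf hf)
  obtain ⟨hl2, hu2⟩ := abs_le.mp (bnd4 ‖ε‖ (ε 0 2) (ε 0 2) (ε 0 2) (ε 0 2) hm1 he he he he)
  obtain ⟨hl3, hu3⟩ := abs_le.mp (bnd3 ‖ε‖ (ε 0 1) (ε 0 2) (ε 1 2) hd he hf)
  obtain ⟨hl4, hu4⟩ := abs_le.mp (bnd5 ‖ε‖ (ε 0 1) (ε 0 2) (ε 1 2) (ε 1 2) (ε 1 2) hm1 hd he hf hf hf)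
  obtain ⟨hl5, hu5⟩ := abs_le.mp (bnd5 ‖ε‖ (ε 0 1) (ε 0 2) (ε 0 2) (ε 0 2) (ε 1 2) hm1 hd he he he hf)
  obtain ⟨hl6, hu6⟩ := abs_le.mp (bnd4 ‖ε‖ (ε 0 1) (ε 0 1) (ε 1 2) (ε 1 2) hm1 hd hd hf hf)
  obtain ⟨hl7, hu7⟩ := abs_le.mp (bnd4 ‖ε‖ (ε 0 1) (ε 0 1) (ε 0 2) (ε 0 2) hm1 hd hd he he)
  obtain ⟨hl8, hu8⟩ := abs_le.mp (bnd5 ‖ε‖ (ε 0 1) (ε 0 1) (ε 0 1) (ε 0 2) (ε 1 2) hm1 hd hd hd he hf)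
  obtain ⟨hl9, hu9⟩ := abs_le.mp (bnd4 ‖ε‖ (ε 0 1) (ε 0 1) (ε 0 1) (ε 0 1) hm1 hd hd hd hd)
  obtain ⟨hl10, hu10⟩ := abs_le.mp (bnd4 ‖ε‖ (ε 2 2) (ε 0 1) (ε 0 2) (ε 1 2) hm1 hc hd he hf)
  obtain ⟨hl11, hu11⟩ := abs_le.mp (bnd3 ‖ε‖ (ε 2 2) (ε 0 1) (ε 0 1) hc hd hd)
  obtain ⟨hl12, hu12⟩ := abs_le.mp (bnd5 ‖ε‖ (ε 2 2) (ε 0 1) (ε 0 1) (ε 1 2) (ε 1 2) hm1 hc hd hd hf hf)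
  obtain ⟨hl13, hu13⟩ := abs_le.mp (bnd5 ‖ε‖ (ε 2 2) (ε 0 1) (ε 0 1) (ε 0 2) (ε 0 2) hm1 hc hd hd he he)
  obtain ⟨hl14, hu14⟩ := abs_le.mp (bnd5 ‖ε‖ (ε 2 2) (ε 0 1) (ε 0 1) (ε 0 1) (ε 0 1) hm1 hc hd hd hd hd)
  obtain ⟨hl15, hu15⟩ := abs_le.mp (bnd4 ‖ε‖ (ε 2 2) (ε 2 2) (ε 0 1) (ε 0 1) hm1 hc hc hd hd)
  obtain ⟨hl16, hu16⟩ := abs_le.mp (bnd3 ‖ε‖ (ε 1 1) (ε 0 2) (ε 0 2) hb he he)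
  obtain ⟨hl17, hu17⟩ := abs_le.mp (bnd5 ‖ε‖ (ε 1 1) (ε 0 2) (ε 0 2) (ε 1 2) (ε 1 2) hm1 hb he he hf hf)
  obtain ⟨hl18, hu18⟩ := abs_le.mp (bnd5 ‖ε‖ (ε 1 1) (ε 0 2) (ε 0 2) (ε 0 2) (ε 0 2) hm1 hb he he he he)
  obtain ⟨hl19, hu19⟩ := abs_le.mp (bnd4 ‖ε‖ (ε 1 1) (ε 0 1) (ε 0 2) (ε 1 2) hm1 hb hd he hf)
  obtain ⟨hl20, hu20⟩ := abs_le.mp (bnd5 ‖ε‖ (ε 1 1) (ε 0 1) (ε 0 1) (ε 0 2) (ε 0 2) hm1 hb hd hd he he)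
  obtain ⟨hl21, hu21⟩ := abs_le.mp (bnd4 ‖ε‖ (ε 1 1) (ε 2 2) (ε 1 2) (ε 1 2) hm1 hb hc hf hf)
  obtain ⟨hl22, hu22⟩ := abs_le.mp (bnd4 ‖ε‖ (ε 1 1) (ε 2 2) (ε 0 2) (ε 0 2) hm1 hb hc he he)
  obtain ⟨hl23, hu23⟩ := abs_le.mp (bnd5 ‖ε‖ (ε 1 1) (ε 2 2) (ε 0 1) (ε 0 2) (ε 1 2) hm1 hb hc hd he hf)
  obtain ⟨hl24, hu24⟩ := abs_le.mp (bnd4 ‖ε‖ (ε 1 1) (ε 2 2) (ε 0 1) (ε 0 1) hm1 hb hc hd hd)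
  obtain ⟨hl25, hu25⟩ := abs_le.mp (bnd5 ‖ε‖ (ε 1 1) (ε 2 2) (ε 2 2) (ε 0 1) (ε 0 1) hm1 hb hc hc hd hd)
  obtain ⟨hl26, hu26⟩ := abs_le.mp (bnd4 ‖ε‖ (ε 1 1) (ε 1 1) (ε 0 2) (ε 0 2) hm1 hb hb he he)
  obtain ⟨hl27, hu27⟩ := abs_le.mp (bnd5 ‖ε‖ (ε 1 1) (ε 1 1) (ε 2 2) (ε 0 2) (ε 0 2) hm1 hb hb hc he he)
  obtain ⟨hl28, hu28⟩ := abs_le.mp (bnd4 ‖ε‖ (ε 1 1) (ε 1 1) (ε 2 2) (ε 2 2) hm1 hb hb hc hc)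
  obtain ⟨hl29, hu29⟩ := abs_le.mp (bnd3 ‖ε‖ (ε 0 0) (ε 1 2) (ε 1 2) ha hf hf)
  obtain ⟨hl30, hu30⟩ := abs_le.mp (bnd5 ‖ε‖ (ε 0 0) (ε 1 2) (ε 1 2) (ε 1 2) (ε 1 2) hm1 ha hf hf hf hf)
  obtain ⟨hl31, hu31⟩ := abs_le.mp (bnd5 ‖ε‖ (ε 0 0) (ε 0 2) (ε 0 2) (ε 1 2) (ε 1 2) hm1 ha he he hf hf)
  obtain ⟨hl32, hu32⟩ := abs_le.mp (bnd4 ‖ε‖ (ε 0 0) (ε 0 1) (ε 0 2) (ε 1 2) hm1 ha hd he hf)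
  obtain ⟨hl33, hu33⟩ := abs_le.mp (bnd5 ‖ε‖ (ε 0 0) (ε 0 1) (ε 0 1) (ε 1 2) (ε 1 2) hm1 ha hd hd hf hf)
  obtain ⟨hl34, hu34⟩ := abs_le.mp (bnd4 ‖ε‖ (ε 0 0) (ε 2 2) (ε 1 2) (ε 1 2) hm1 ha hc hf hf)
  obtain ⟨hl35, hu35⟩ := abs_le.mp (bnd4 ‖ε‖ (ε 0 0) (ε 2 2) (ε 0 2) (ε 0 2) hm1 ha hc he he)
  obtain ⟨hl36, hu36⟩ := abs_le.mp (bnd5 ‖ε‖ (ε 0 0) (ε 2 2) (ε 0 1) (ε 0 2) (ε 1 2) hm1 ha hc hd he hf)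
  obtain ⟨hl37, hu37⟩ := abs_le.mp (bnd4 ‖ε‖ (ε 0 0) (ε 2 2) (ε 0 1) (ε 0 1) hm1 ha hc hd hd)
  obtain ⟨hl38, hu38⟩ := abs_le.mp (bnd5 ‖ε‖ (ε 0 0) (ε 2 2) (ε 2 2) (ε 0 1) (ε 0 1) hm1 ha hc hc hd hd)
  obtain ⟨hl39, hu39⟩ := abs_le.mp (bnd4 ‖ε‖ (ε 0 0) (ε 1 1) (ε 1 2) (ε 1 2) hm1 ha hb hf hf)
  obtain ⟨hl40, hu40⟩ := abs_le.mp (bnd4 ‖ε‖ (ε 0 0) (ε 1 1) (ε 0 2) (ε 0 2) hm1 ha hb he he)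
  obtain ⟨hl41, hu41⟩ := abs_le.mp (bnd5 ‖ε‖ (ε 0 0) (ε 1 1) (ε 0 1) (ε 0 2) (ε 1 2) hm1 ha hb hd he hf)
  obtain ⟨hl42, hu42⟩ := abs_le.mp (bnd4 ‖ε‖ (ε 0 0) (ε 1 1) (ε 0 1) (ε 0 1) hm1 ha hb hd hd)
  obtain ⟨hl43, hu43⟩ := abs_le.mp (bnd3 ‖ε‖ (ε 0 0) (ε 1 1) (ε 2 2) ha hb hc)
  obtain ⟨hl44, hu44⟩ := abs_le.mp (bnd5 ‖ε‖ (ε 0 0) (ε 1 1) (ε 2 2) (ε 1 2) (ε 1 2) hm1 ha hb hc hf hf)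
  obtain ⟨hl45, hu45⟩ := abs_le.mp (bnd5 ‖ε‖ (ε 0 0) (ε 1 1) (ε 2 2) (ε 0 2) (ε 0 2) hm1 ha hb hc he he)
  obtain ⟨hl46, hu46⟩ := abs_le.mp (bnd5 ‖ε‖ (ε 0 0) (ε 1 1) (ε 2 2) (ε 0 1) (ε 0 1) hm1 ha hb hc hd hd)
  obtain ⟨hl47, hu47⟩ := abs_le.mp (bnd4 ‖ε‖ (ε 0 0) (ε 1 1) (ε 2 2) (ε 2 2) hm1 ha hb hc hc)
  obtain ⟨hl48, hu48⟩ := abs_le.mp (bnd5 ‖ε‖ (ε 0 0) (ε 1 1) (ε 1 1) (ε 0 2) (ε 0 2) hm1 ha hb hb he he)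
  obtain ⟨hl49, hu49⟩ := abs_le.mp (bnd4 ‖ε‖ (ε 0 0) (ε 1 1) (ε 1 1) (ε 2 2) hm1 ha hb hb hc)
  obtain ⟨hl50, hu50⟩ := abs_le.mp (bnd5 ‖ε‖ (ε 0 0) (ε 1 1) (ε 1 1) (ε 2 2) (ε 2 2) hm1 ha hb hb hc hc)
  obtain ⟨hl51, hu51⟩ := abs_le.mp (bnd4 ‖ε‖ (ε 0 0) (ε 0 0) (ε 1 2) (ε 1 2) hm1 ha ha hf hf)
  obtain ⟨hl52, hu52⟩ := abs_le.mp (bnd5 ‖ε‖ (ε 0 0) (ε 0 0) (ε 2 2) (ε 1 2) (ε 1 2) hm1 ha ha hc hf hf)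
  obtain ⟨hl53, hu53⟩ := abs_le.mp (bnd4 ‖ε‖ (ε 0 0) (ε 0 0) (ε 2 2) (ε 2 2) hm1 ha ha hc hc)
  obtain ⟨hl54, hu54⟩ := abs_le.mp (bnd5 ‖ε‖ (ε 0 0) (ε 0 0) (ε 1 1) (ε 1 2) (ε 1 2) hm1 ha ha hb hf hf)
  obtain ⟨hl55, hu55⟩ := abs_le.mp (bnd4 ‖ε‖ (ε 0 0) (ε 0 0) (ε 1 1) (ε 2 2) hm1 ha ha hb hc)
  obtain ⟨hl56, hu56⟩ := abs_le.mp (bnd5 ‖ε‖ (ε 0 0) (ε 0 0) (ε 1 1) (ε 2 2) (ε 2 2) hm1 ha ha hb hc hc)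
  obtain ⟨hl57, hu57⟩ := abs_le.mp (bnd4 ‖ε‖ (ε 0 0) (ε 0 0) (ε 1 1) (ε 1 1) hm1 ha ha hb hb)
  obtain ⟨hl58, hu58⟩ := abs_le.mp (bnd5 ‖ε‖ (ε 0 0) (ε 0 0) (ε 1 1) (ε 1 1) (ε 2 2) hm1 ha ha hb hb hc)
  have habs : |((1/4) * ε 1 2 * ε 1 2 * ε 1 2 * ε 1 2 + (1/2) * ε 0 2 * ε 0 2 * ε 1 2 * ε 1 2 + (1/4) * ε 0 2 * ε 0 2 * ε 0 2 * ε 0 2 + (3/2) * ε 0 1 * ε 0 2 * ε 1 2 + (-1/2) * ε 0 1 * ε 0 2 * ε 1 2 * ε 1 2 * ε 1 2 + (-1/2) * ε 0 1 * ε 0 2 * ε 0 2 * ε 0 2 * ε 1 2 + (1/2) * ε 0 1 * ε 0 1 * ε 1 2 * ε 1 2 + (1/2) * ε 0 1 * ε 0 1 * ε 0 2 * ε 0 2 + (-1/2) * ε 0 1 * ε 0 1 * ε 0 1 * ε 0 2 * ε 1 2 + (1/4) * ε 0 1 * ε 0 1 * ε 0 1 * ε 0 1 + (-1/2) * ε 2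 2 * ε 0 1 * ε 0 2 * ε 1 2 + (-3/4) * ε 2 2 * ε 0 1 * ε 0 1 + (1/4) * ε 2 2 * ε 0 1 * ε 0 1 * ε 1 2 * ε 1 2 + (1/4) * ε 2 2 * ε 0 1 * ε 0 1 * ε 0 2 * ε 0 2 + (1/4) * ε 2 2 * ε 0 1 * ε 0 1 * ε 0 1 * ε 0 1 + (1/4) * ε 2 2 * ε 2 2 * ε 0 1 * ε 0 1 + (-3/4) * ε 1 1 * ε 0 2 * ε 0 2 + (1/4) * ε 1 1 * ε 0 2 * ε 0 2 * ε 1 2 * ε 1 2 + (1/4) * ε 1 1 * ε 0 2 * ε 0 2 * ε 0 2 * ε 0 2 + (-1/2) * ε 1 1 * ε 0 1 * ε 0 2 * ε 1 2 + (1/4) * ε 1 1 * ε 0 1 * ε 0 1 * ε 0 2 * ε 0 2 + (-1/2) * ε 1 1 * ε 2 2 * ε 1 2 * ε 1 2 + (-1/4) * ε 1 1 * ε 2 2 * ε 0 2 * ε 0 2 + (1/2) * ε 1 1 * ε 2 2 * ε 0 1 * ε 0 2 * ε 1 2 + (-1/4) * ε 1 1 * ε 2 2 * ε 0 1 * ε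 0 1 + (-1/4) * ε 1 1 * ε 2 2 * ε 2 2 * ε 0 1 * ε 0 1 + (1/4) * ε 1 1 * ε 1 1 * ε 0 2 * ε 0 2 + (-1/4) * ε 1 1 * ε 1 1 * ε 2 2 * ε 0 2 * ε 0 2 + (1/4) * ε 1 1 * ε 1 1 * ε 2 2 * ε 2 2 + (-3/4) * ε 0 0 * ε 1 2 * ε 1 2 + (1/4) * ε 0 0 * ε 1 2 * ε 1 2 * ε 1 2 * ε 1 2 + (1/4) * ε 0 0 * ε 0 2 * ε 0 2 * ε 1 2 * ε 1 2 + (-1/2) * ε 0 0 * ε 0 1 * ε 0 2 * ε 1 2 + (1/4) * ε 0 0 * ε 0 1 * ε 0 1 * ε 1 2 * ε 1 2 + (-1/4) * ε 0 0 * ε 2 2 * ε 1 2 * ε 1 2 + (-1/2) * ε 0 0 * ε 2 2 * ε 0 2 * ε 0 2 + (1/2) * ε 0 0 * ε 2 2 * ε 0 1 * ε 0 2 * ε 1 2 + (-1/4) * ε 0 0 * ε 2 2 * ε 0 1 * ε 0 1 + (-1/4) * ε 0 0 * ε 2 2 * ε 2 2 * ε 0 1 * ε 0 1 + (-1/4)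 * ε 0 0 * ε 1 1 * ε 1 2 * ε 1 2 + (-1/4) * ε 0 0 * ε 1 1 * ε 0 2 * ε 0 2 + (1/2) * ε 0 0 * ε 1 1 * ε 0 1 * ε 0 2 * ε 1 2 + (-1/2) * ε 0 0 * ε 1 1 * ε 0 1 * ε 0 1 + (3/4) * ε 0 0 * ε 1 1 * ε 2 2 + (-1/2) * ε 0 0 * ε 1 1 * ε 2 2 * ε 1 2 * ε 1 2 + (-1/2) * ε 0 0 * ε 1 1 * ε 2 2 * ε 0 2 * ε 0 2 + (-1/2) * ε 0 0 * ε 1 1 * ε 2 2 * ε 0 1 * ε 0 1 + (1/4) * ε 0 0 * ε 1 1 * ε 2 2 * ε 2 2 + (-1/4) * ε 0 0 * ε 1 1 * ε 1 1 * ε 0 2 * ε 0 2 + (1/4) * ε 0 0 * ε 1 1 * ε 1 1 * ε 2 2 + (1/4) * ε 0 0 * ε 1 1 * ε 1 1 * ε 2 2 * ε 2 2 + (1/4) * ε 0 0 * ε 0 0 * ε 1 2 * ε 1 2 + (-1/4) * ε 0 0 * ε 0 0 * ε 2 2 * ε 1 2 * ε 1 2 + (1/4) * ε 0 0 * ε 0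 0 * ε 2 2 * ε 2 2 + (-1/4) * ε 0 0 * ε 0 0 * ε 1 1 * ε 1 2 * ε 1 2 + (1/4) * ε 0 0 * ε 0 0 * ε 1 1 * ε 2 2 + (1/4) * ε 0 0 * ε 0 0 * ε 1 1 * ε 2 2 * ε 2 2 + (1/4) * ε 0 0 * ε 0 0 * ε 1 1 * ε 1 1 + (1/4) * ε 0 0 * ε 0 0 * ε 1 1 * ε 1 1 * ε 2 2)| ≤ (45/2) * ‖ε‖ ^ 3 := by
    rw [abs_le]
    constructor
    · linarith
    · linarith
  have htr : ε.trace = ε 0 0 + ε 1 1 + ε 2 2 := Matrix.trace_fin_three ε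
  rw [hS, htr]
  have hkey : ((-3/4) + (1) * ε 1 2 * ε 1 2 + (1) * ε 0 2 * ε 0 2 + (1) * ε 0 1 * ε 0 1 + (-1/2) * ε 2 2 + (1/4) * ε 2 2 * ε 2 2 + (-1/2) * ε 1 1 + (-1/2) * ε 1 1 * ε 2 2 + (1/4) * ε 1 1 * ε 1 1 + (-1/2) * ε 0 0 + (-1/2) * ε 0 0 * ε 2 2 + (-1/2) * ε 0 0 * ε 1 1 + (1/4) * ε 0 0 * ε 0 0) / ((1) + (-1) * ε 1 2 * ε 1 2 + (-1) * ε 0 2 * ε 0 2 + (2) * ε 0 1 * ε 0 2 * ε 1 2 + (-1) * ε 0 1 * ε 0 1 + (1) * ε 2 2 + (-1) * ε 2 2 * ε 0 1 * ε 0 1 + (1) * ε 1 1 + (-1) * ε 1 1 * ε 0 2 * ε 0 2 + (1) * ε 1 1 * ε 2 2 + (1) * ε 0 0 + (-1) * ε 0 0 * ε 1 2 * ε 1 2 + (1) * ε 0 0 * ε 2 2 + (1) * ε 0 0 * ε 1 1 + (1) * ε 0 0 * ε 1 1 * ε 2 2) -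
      (-(3 / 4) + (1 / 4) * (ε 0 0 + ε 1 1 + ε 2 2) - (1 / 12) * (ε 0 0 + ε 1 1 + ε 2 2) ^ 2 +
        (1 / 4) * ((ε 0 1) ^ 2 + (ε 0 2) ^ 2 + (ε 1 2) ^ 2) +
        (1 / 24) * ((ε 0 0 - ε 1 1) ^ 2 + (ε 0 0 - ε 2 2) ^ 2 +
          (ε 1 1 - ε 2 2) ^ 2)) = ((1/4) * ε 1 2 * ε 1 2 * ε 1 2 * ε 1 2 + (1/2) * ε 0 2 * ε 0 2 * ε 1 2 * ε 1 2 + (1/4) * ε 0 2 * ε 0 2 * ε 0 2 * ε 0 2 + (3/2) * ε 0 1 * ε 0 2 * ε 1 2 + (-1/2) * ε 0 1 * ε 0 2 * ε 1 2 * ε 1 2 * ε 1 2 + (-1/2) * ε 0 1 * ε 0 2 * ε 0 2 * ε 0 2 * ε 1 2 + (1/2) * ε 0 1 * ε 0 1 * ε 1 2 * ε 1 2 + (1/2) * ε 0 1 * ε 0 1 * ε 0 2 * ε 0 2 + (-1/2) * ε 0 1 * ε 0 1 * ε 0 1 * ε 0 2 * ε 1 2 + (1/4) * ε 0 1 * ε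 0 1 * ε 0 1 * ε 0 1 + (-1/2) * ε 2 2 * ε 0 1 * ε 0 2 * ε 1 2 + (-3/4) * ε 2 2 * ε 0 1 * ε 0 1 + (1/4) * ε 2 2 * ε 0 1 * ε 0 1 * ε 1 2 * ε 1 2 + (1/4) * ε 2 2 * ε 0 1 * ε 0 1 * ε 0 2 * ε 0 2 + (1/4) * ε 2 2 * ε 0 1 * ε 0 1 * ε 0 1 * ε 0 1 + (1/4) * ε 2 2 * ε 2 2 * ε 0 1 * ε 0 1 + (-3/4) * ε 1 1 * ε 0 2 * ε 0 2 + (1/4) * ε 1 1 * ε 0 2 * ε 0 2 * ε 1 2 * ε 1 2 + (1/4) * ε 1 1 * ε 0 2 * ε 0 2 * ε 0 2 * ε 0 2 + (-1/2) * ε 1 1 * ε 0 1 * ε 0 2 * ε 1 2 + (1/4) * ε 1 1 * ε 0 1 * ε 0 1 * ε 0 2 * ε 0 2 + (-1/2) * ε 1 1 * ε 2 2 * ε 1 2 * ε 1 2 + (-1/4) * ε 1 1 * ε 2 2 * ε 0 2 * ε 0 2 + (1/2) * ε 1 1 * ε 2 2 * ε 0 1 * ε 0 2 * ε 1 2 +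 (-1/4) * ε 1 1 * ε 2 2 * ε 0 1 * ε 0 1 + (-1/4) * ε 1 1 * ε 2 2 * ε 2 2 * ε 0 1 * ε 0 1 + (1/4) * ε 1 1 * ε 1 1 * ε 0 2 * ε 0 2 + (-1/4) * ε 1 1 * ε 1 1 * ε 2 2 * ε 0 2 * ε 0 2 + (1/4) * ε 1 1 * ε 1 1 * ε 2 2 * ε 2 2 + (-3/4) * ε 0 0 * ε 1 2 * ε 1 2 + (1/4) * ε 0 0 * ε 1 2 * ε 1 2 * ε 1 2 * ε 1 2 + (1/4) * ε 0 0 * ε 0 2 * ε 0 2 * ε 1 2 * ε 1 2 + (-1/2) * ε 0 0 * ε 0 1 * ε 0 2 * ε 1 2 + (1/4) * ε 0 0 * ε 0 1 * ε 0 1 * ε 1 2 * ε 1 2 + (-1/4) * ε 0 0 * ε 2 2 * ε 1 2 * ε 1 2 + (-1/2) * ε 0 0 * ε 2 2 * ε 0 2 * ε 0 2 + (1/2) * ε 0 0 * ε 2 2 * ε 0 1 * ε 0 2 * ε 1 2 + (-1/4) * ε 0 0 * ε 2 2 * ε 0 1 * ε 0 1 + (-1/4) * ε 0 0 * ε 2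 2 * ε 2 2 * ε 0 1 * ε 0 1 + (-1/4) * ε 0 0 * ε 1 1 * ε 1 2 * ε 1 2 + (-1/4) * ε 0 0 * ε 1 1 * ε 0 2 * ε 0 2 + (1/2) * ε 0 0 * ε 1 1 * ε 0 1 * ε 0 2 * ε 1 2 + (-1/2) * ε 0 0 * ε 1 1 * ε 0 1 * ε 0 1 + (3/4) * ε 0 0 * ε 1 1 * ε 2 2 + (-1/2) * ε 0 0 * ε 1 1 * ε 2 2 * ε 1 2 * ε 1 2 + (-1/2) * ε 0 0 * ε 1 1 * ε 2 2 * ε 0 2 * ε 0 2 + (-1/2) * ε 0 0 * ε 1 1 * ε 2 2 * ε 0 1 * ε 0 1 + (1/4) * ε 0 0 * ε 1 1 * ε 2 2 * ε 2 2 + (-1/4) * ε 0 0 * ε 1 1 * ε 1 1 * ε 0 2 * ε 0 2 + (1/4) * ε 0 0 * ε 1 1 * ε 1 1 * ε 2 2 + (1/4) * ε 0 0 * ε 1 1 * ε 1 1 * ε 2 2 * ε 2 2 + (1/4) * ε 0 0 * ε 0 0 * ε 1 2 * ε 1 2 + (-1/4) * ε 0 0 * ε 0 0 * ε 2 2 *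 ε 1 2 * ε 1 2 + (1/4) * ε 0 0 * ε 0 0 * ε 2 2 * ε 2 2 + (-1/4) * ε 0 0 * ε 0 0 * ε 1 1 * ε 1 2 * ε 1 2 + (1/4) * ε 0 0 * ε 0 0 * ε 1 1 * ε 2 2 + (1/4) * ε 0 0 * ε 0 0 * ε 1 1 * ε 2 2 * ε 2 2 + (1/4) * ε 0 0 * ε 0 0 * ε 1 1 * ε 1 1 + (1/4) * ε 0 0 * ε 0 0 * ε 1 1 * ε 1 1 * ε 2 2) / ((1) + (-1) * ε 1 2 * ε 1 2 + (-1) * ε 0 2 * ε 0 2 + (2) * ε 0 1 * ε 0 2 * ε 1 2 + (-1) * ε 0 1 * ε 0 1 + (1) * ε 2 2 + (-1) * ε 2 2 * ε 0 1 * ε 0 1 + (1) * ε 1 1 + (-1) * ε 1 1 * ε 0 2 * ε 0 2 + (1) * ε 1 1 * ε 2 2 + (1) * ε 0 0 + (-1) * ε 0 0 * ε 1 2 * ε 1 2 + (1) * ε 0 0 * ε 2 2 + (1) * ε 0 0 * ε 1 1 + (1) * ε 0 0 * ε 1 1 * ε 2 2) := by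
    rw [eq_div_iff hDne, sub_mul, div_mul_cancel₀ _ hDne]
    ring
  rw [hkey, abs_div, abs_of_pos hDpos]
  calc |((1/4) * ε 1 2 * ε 1 2 * ε 1 2 * ε 1 2 + (1/2) * ε 0 2 * ε 0 2 * ε 1 2 * ε 1 2 + (1/4) * ε 0 2 * ε 0 2 * ε 0 2 * ε 0 2 + (3/2) * ε 0 1 * ε 0 2 * ε 1 2 + (-1/2) * ε 0 1 * ε 0 2 * ε 1 2 * ε 1 2 * ε 1 2 + (-1/2) * ε 0 1 * ε 0 2 * ε 0 2 * ε 0 2 * ε 1 2 + (1/2) * ε 0 1 * ε 0 1 * ε 1 2 * ε 1 2 + (1/2) * ε 0 1 * ε 0 1 * ε 0 2 * ε 0 2 + (-1/2) * ε 0 1 * ε 0 1 * ε 0 1 * ε 0 2 * ε 1 2 + (1/4) * ε 0 1 * ε 0 1 * ε 0 1 * ε 0 1 + (-1/2) * ε 2 2 * ε 0 1 * ε 0 2 * ε 1 2 + (-3/4) * ε 2 2 * ε 0 1 * ε 0 1 + (1/4) * ε 2 2 * ε 0 1 * ε 0 1 * ε 1 2 * ε 1 2 + (1/4) * ε 2 2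 * ε 0 1 * ε 0 1 * ε 0 2 * ε 0 2 + (1/4) * ε 2 2 * ε 0 1 * ε 0 1 * ε 0 1 * ε 0 1 + (1/4) * ε 2 2 * ε 2 2 * ε 0 1 * ε 0 1 + (-3/4) * ε 1 1 * ε 0 2 * ε 0 2 + (1/4) * ε 1 1 * ε 0 2 * ε 0 2 * ε 1 2 * ε 1 2 + (1/4) * ε 1 1 * ε 0 2 * ε 0 2 * ε 0 2 * ε 0 2 + (-1/2) * ε 1 1 * ε 0 1 * ε 0 2 * ε 1 2 + (1/4) * ε 1 1 * ε 0 1 * ε 0 1 * ε 0 2 * ε 0 2 + (-1/2) * ε 1 1 * ε 2 2 * ε 1 2 * ε 1 2 + (-1/4) * ε 1 1 * ε 2 2 * ε 0 2 * ε 0 2 + (1/2) * ε 1 1 * ε 2 2 * ε 0 1 * ε 0 2 * ε 1 2 + (-1/4) * ε 1 1 * ε 2 2 * ε 0 1 * ε 0 1 + (-1/4) * ε 1 1 * ε 2 2 * ε 2 2 * ε 0 1 * ε 0 1 + (1/4) * ε 1 1 * ε 1 1 * ε 0 2 * ε 0 2 + (-1/4) * ε 1 1 * ε 1 1 * ε 2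 2 * ε 0 2 * ε 0 2 + (1/4) * ε 1 1 * ε 1 1 * ε 2 2 * ε 2 2 + (-3/4) * ε 0 0 * ε 1 2 * ε 1 2 + (1/4) * ε 0 0 * ε 1 2 * ε 1 2 * ε 1 2 * ε 1 2 + (1/4) * ε 0 0 * ε 0 2 * ε 0 2 * ε 1 2 * ε 1 2 + (-1/2) * ε 0 0 * ε 0 1 * ε 0 2 * ε 1 2 + (1/4) * ε 0 0 * ε 0 1 * ε 0 1 * ε 1 2 * ε 1 2 + (-1/4) * ε 0 0 * ε 2 2 * ε 1 2 * ε 1 2 + (-1/2) * ε 0 0 * ε 2 2 * ε 0 2 * ε 0 2 + (1/2) * ε 0 0 * ε 2 2 * ε 0 1 * ε 0 2 * ε 1 2 + (-1/4) * ε 0 0 * ε 2 2 * ε 0 1 * ε 0 1 + (-1/4) * ε 0 0 * ε 2 2 * ε 2 2 * ε 0 1 * ε 0 1 + (-1/4) * ε 0 0 * ε 1 1 * ε 1 2 * ε 1 2 + (-1/4) * ε 0 0 * ε 1 1 * ε 0 2 * ε 0 2 + (1/2) * ε 0 0 * ε 1 1 * ε 0 1 * ε 0 2 * ε 1 2 +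 (-1/2) * ε 0 0 * ε 1 1 * ε 0 1 * ε 0 1 + (3/4) * ε 0 0 * ε 1 1 * ε 2 2 + (-1/2) * ε 0 0 * ε 1 1 * ε 2 2 * ε 1 2 * ε 1 2 + (-1/2) * ε 0 0 * ε 1 1 * ε 2 2 * ε 0 2 * ε 0 2 + (-1/2) * ε 0 0 * ε 1 1 * ε 2 2 * ε 0 1 * ε 0 1 + (1/4) * ε 0 0 * ε 1 1 * ε 2 2 * ε 2 2 + (-1/4) * ε 0 0 * ε 1 1 * ε 1 1 * ε 0 2 * ε 0 2 + (1/4) * ε 0 0 * ε 1 1 * ε 1 1 * ε 2 2 + (1/4) * ε 0 0 * ε 1 1 * ε 1 1 * ε 2 2 * ε 2 2 + (1/4) * ε 0 0 * ε 0 0 * ε 1 2 * ε 1 2 + (-1/4) * ε 0 0 * ε 0 0 * ε 2 2 * ε 1 2 * ε 1 2 + (1/4) * ε 0 0 * ε 0 0 * ε 2 2 * ε 2 2 + (-1/4) * ε 0 0 * ε 0 0 * ε 1 1 * ε 1 2 * ε 1 2 + (1/4) * ε 0 0 * ε 0 0 * ε 1 1 * ε 2 2 + (1/4) * ε 0 0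 * ε 0 0 * ε 1 1 * ε 2 2 * ε 2 2 + (1/4) * ε 0 0 * ε 0 0 * ε 1 1 * ε 1 1 + (1/4) * ε 0 0 * ε 0 0 * ε 1 1 * ε 1 1 * ε 2 2)| / ((1) + (-1) * ε 1 2 * ε 1 2 + (-1) * ε 0 2 * ε 0 2 + (2) * ε 0 1 * ε 0 2 * ε 1 2 + (-1) * ε 0 1 * ε 0 1 + (1) * ε 2 2 + (-1) * ε 2 2 * ε 0 1 * ε 0 1 + (1) * ε 1 1 + (-1) * ε 1 1 * ε 0 2 * ε 0 2 + (1) * ε 1 1 * ε 2 2 + (1) * ε 0 0 + (-1) * ε 0 0 * ε 1 2 * ε 1 2 + (1) * ε 0 0 * ε 2 2 + (1) * ε 0 0 * ε 1 1 + (1) * ε 0 0 * ε 1 1 * ε 2 2) ≤ ((45/2) * ‖ε‖ ^ 3) / (1/2) :=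
        div_le_div₀ (by positivity) habs (by norm_num) hD2
    _ = 45 * ‖ε‖ ^ 3 := by ring
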